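/- arXiv:2512.00416 — 6 statements merged into one kernel-verified Lean document; each statement's English description precedes it below -/
import Mathlib

section
/- For all natural numbers α, β and every polynomial f, the δ-fold integral satisfies I^δ(xᵅ · I^β(f))(x) = Σ_{k=0}^{α} (−1)^k (α)_k · C(k+δ−1, δ−1) · x^{α−k} · I^{β+δ+k}(f)(x). -/
open Polynomial Finset

/-- The integration operator `f ↦ ∫₀ˣ f(t) dt` on rational polynomials. -/
noncomputable def intOp (f : Polynomial ℚ) : Polynomial ℚ :=
  f.sum (fun n a => Polynomial.C (a / (n + 1)) * Polynomial.X ^ (n + 1))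

lemma derivative_intOp (p : ℚ[X]) : derivative (intOp p) = p := by
  unfold intOp
  rw [Polynomial.sum, map_sum]
  conv_rhs => rw [← Polynomial.sum_C_mul_X_pow_eq p, Polynomial.sum]
  refine Finset.sum_congr rfl fun n hn => ?_
  rw [derivative_C_mul, derivative_X_pow]
  rw [Nat.add_sub_cancel, ← mul_assoc, ← C_mul]
  congr 1
  push_cast
  rw [div_mul_cancel₀]
  positivity

lemma coeff_zero_intOp (p : ℚ[X]) : (intOp p).coeff 0 = 0 := by
  unfold intOp
  rw [Polynomial.sum, finset_sum_coeff]
  simp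

lemma poly_unique {p q : ℚ[X]} (h : derivative p = derivative q) (h0 : p.coeff 0 = q.coeff 0) :
    p = q := by
  have hd : derivative (p - q) = 0 := by rw [derivative_sub, h, sub_self]
  have := Polynomial.natDegree_eq_zero_of_derivative_eq_zero hd
  have hc : p - q = C ((p - q).coeff 0) := (Polynomial.eq_C_of_natDegree_eq_zero this)
  rw [coeff_sub, h0, sub_self, map_zero] at hc
  exact sub_eq_zero.mp hc

lemma intOp_add (p q : ℚ[X]) : intOp (p + q) = intOp p + intOp q := by
  apply poly_unique
  · rw [derivative_add, derivative_intOp, derivative_intOp, derivative_intOp]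
  · rw [coeff_add, coeff_zero_intOp, coeff_zero_intOp, coeff_zero_intOp, add_zero]

lemma intOp_sub (p q : ℚ[X]) : intOp (p - q) = intOp p - intOp q := by
  apply poly_unique
  · rw [derivative_sub, derivative_intOp, derivative_intOp, derivative_intOp]
  · rw [coeff_sub, coeff_zero_intOp, coeff_zero_intOp, coeff_zero_intOp, sub_zero]

lemma intOp_iter_sub (n : ℕ) (p q : ℚ[X]) :
    intOp^[n] (p - q) = intOp^[n] p - intOp^[n] q := by
  induction n generalizing p q with
  | zero => simp
  | succ n ih => rw [Function.iterate_succ_apply, intOp_sub, ih,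
      Function.iterate_succ_apply, Function.iterate_succ_apply]

lemma intOp_X_mul (h : ℚ[X]) : intOp (X * h) = X * intOp h - intOp (intOp h) := by
  apply poly_unique
  · rw [derivative_intOp, derivative_sub, derivative_mul, derivative_X, derivative_intOp,
      derivative_intOp, one_mul]
    ring
  · rw [coeff_zero_intOp, coeff_sub, coeff_zero_intOp, mul_coeff_zero, coeff_X_zero,
      zero_mul, sub_zero]

lemma intOp_iter_X_mul (n : ℕ) (h : ℚ[X]) :
    intOp^[n] (X * h) = X * intOp^[n] h - C (n : ℚ) * intOp^[n+1] h := by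
  induction n generalizing h with
  | zero => simp
  | succ n ih =>
    rw [Function.iterate_succ_apply, intOp_X_mul, intOp_iter_sub, ih (intOp h)]
    have e1 : intOp^[n] (intOp h) = intOp^[n+1] h :=
      (Function.iterate_succ_apply intOp n h).symm
    have e2 : intOp^[n+1] (intOp h) = intOp^[n+1+1] h :=
      (Function.iterate_succ_apply intOp (n+1) h).symm
    have e3 : intOp^[n] (intOp (intOp h)) = intOp^[n+1+1] h := by
      rw [← Function.iterate_succ_apply, ← Function.iterate_succ_apply]
    rw [e1, e2, e3]
    push_cast
    rw [map_add, map_one]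
    ring

lemma sum_shift_aux {M : Type*} [AddCommGroup M] (s t u : ℕ → M) (α : ℕ)
    (h0 : t 0 = s 0) (hs : s (α+1) = 0)
    (h : ∀ k ∈ Finset.range (α+1), t (k+1) = s (k+1) - u k) :
    (∑ k ∈ Finset.range (α+1), s k) - ∑ k ∈ Finset.range (α+1), u k
      = ∑ k ∈ Finset.range (α+1+1), t k := by
  rw [Finset.sum_range_succ' t, Finset.sum_congr rfl h, h0]
  rw [Finset.sum_sub_distrib]
  have h1 := Finset.sum_range_succ s (α+1)
  have h2 := Finset.sum_range_succ' s (α+1)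
  rw [hs, add_zero] at h1
  rw [h1] at h2
  have h3 : ∑ k ∈ Finset.range (α+1), s (k+1) = (∑ k ∈ Finset.range (α+1), s k) - s 0 := by
    rw [eq_sub_iff_add_eq]; exact h2.symm
  rw [h3]
  abel

lemma choose_step (k d : ℕ) : (d+1) * Nat.choose (k+d+1) (d+1) = (k+1) * Nat.choose (k+d+1) d := by
  have := Nat.choose_succ_right_eq (k+d+1) d
  have e : k+d+1-d = k+1 := by omega
  rw [e] at this
  rw [mul_comm, this, mul_comm]

lemma coeff_step (α k d : ℕ) (hk : k ≤ α) :
    (((α+1).descFactorial (k+1) : ℚ)) * (Nat.choose (k+d+1) d : ℚ)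
      = (α.descFactorial (k+1) : ℚ) * (Nat.choose (k+d+1) d : ℚ)
        + ((d:ℚ)+1) * ((α.descFactorial k : ℚ) * (Nat.choose (k+d+1) (d+1) : ℚ)) := by
  have h1 := congrArg (Nat.cast : ℕ → ℚ) (choose_step k d)
  push_cast at h1
  rw [Nat.succ_descFactorial_succ, Nat.descFactorial_succ]
  push_cast [Nat.cast_sub hk]
  linear_combination (-(α.descFactorial k : ℚ)) * h1

lemma main_aux (β : ℕ) (f : ℚ[X]) : ∀ α d : ℕ,
    intOp^[d+1] (X ^ α * intOp^[β] f) =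
      ∑ k ∈ Finset.range (α + 1),
        C ((-1:ℚ)^k * (α.descFactorial k : ℚ) * (Nat.choose (k + d) d : ℚ)) *
          X ^ (α - k) * intOp^[β + (d+1) + k] f := by
  intro α
  induction α with
  | zero =>
    intro d
    rw [Finset.sum_range_one]
    simp only [pow_zero, one_mul, Nat.descFactorial_zero, Nat.choose_self, Nat.cast_one,
      zero_add, Nat.sub_zero, mul_one, add_zero, map_one]
    rw [← Function.iterate_add_apply, show β + (d+1) = d+1+β from by omega]
  | succ α ih =>
    intro d
    rw [pow_succ', mul_assoc, intOp_iter_X_mul (d+1), ih d, ih (d+1)]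
    rw [Finset.mul_sum, Finset.mul_sum]
    apply sum_shift_aux
    · -- t 0 = s 0
      simp only [pow_zero, one_mul, Nat.descFactorial_zero, Nat.cast_one, Nat.sub_zero,
        add_zero, zero_add]
      ring
    · -- s (α+1) = 0
      rw [Nat.descFactorial_eq_zero_iff_lt.mpr (Nat.lt_succ_self α)]
      simp
    · -- step
      intro k hk
      have hk' : k ≤ α := Nat.lt_succ_iff.mp (Finset.mem_range.mp hk)
      have eidx : β + (d+1+1) + k = β + (d+1) + (k+1) := by omega
      rw [eidx]
      have e3 : k+1+d = k+d+1 := by omega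
      have e4 : k+(d+1) = k+d+1 := by omega
      have hco : ((-1:ℚ))^(k+1) * ((α+1).descFactorial (k+1) : ℚ) * (Nat.choose (k+1+d) d : ℚ)
          = (-1:ℚ)^(k+1) * (α.descFactorial (k+1) : ℚ) * (Nat.choose (k+1+d) d : ℚ)
            - ((d:ℚ)+1) * ((-1:ℚ)^k * (α.descFactorial k : ℚ) * (Nat.choose (k+(d+1)) (d+1) : ℚ)) := by
        rw [e3, e4]
        have h := coeff_step α k d hk'
        linear_combination ((-1:ℚ)^(k+1)) * h
      have hC : (C ((-1:ℚ)^(k+1) * ((α+1).descFactorial (k+1) : ℚ) * (Nat.choose (k+1+d) d : ℚ)) : ℚ[X])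
          = C ((-1:ℚ)^(k+1) * (α.descFactorial (k+1) : ℚ) * (Nat.choose (k+1+d) d : ℚ))
            - C ((d:ℚ)+1) * C ((-1:ℚ)^k * (α.descFactorial k : ℚ) * (Nat.choose (k+(d+1)) (d+1) : ℚ)) := by
        rw [← map_mul, ← map_sub]
        exact congrArg C hco
      have hcast : (C ((d:ℚ)+1) : ℚ[X]) = C ((d+1 : ℕ) : ℚ) := by push_cast; ring
      rcases lt_or_eq_of_le hk' with hlt | rfl
      · have e1 : α + 1 - (k+1) = (α - (k+1)) + 1 := by omega
        have e2 : α - k = (α - (k+1)) + 1 := by omega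
        rw [e1, e2]
        rw [← hcast] at *
        linear_combination (X ^ (α - (k+1) + 1) * intOp^[β + (d+1) + (k+1)] f) * hC
      · -- k = α case (α replaced by k)
        rw [Nat.descFactorial_eq_zero_iff_lt.mpr (Nat.lt_succ_self k)] at hC ⊢
        simp only [Nat.cast_zero, mul_zero, zero_mul, map_zero, zero_sub] at hC ⊢
        simp only [Nat.sub_self]
        rw [← hcast]
        linear_combination (X ^ (0:ℕ) * intOp^[β + (d+1) + (k+1)] f) * hC

theorem iterated_integration_by_parts (α β δ : ℕ) (hδ : 1 ≤ δ) (f : Polynomial ℚ) :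
    intOp^[δ] (X ^ α * intOp^[β] f) =
      ∑ k ∈ Finset.range (α + 1),
        Polynomial.C ((-1 : ℚ) ^ k * (α.descFactorial k : ℚ) *
            (Nat.choose (k + δ - 1) (δ - 1) : ℚ)) *
          X ^ (α - k) * intOp^[β + δ + k] f := by
  obtain ⟨d, rfl⟩ := Nat.exists_eq_add_of_le' hδ
  have e : ∀ k : ℕ, k + (d + 1) - 1 = k + d := fun k => by omega
  simp only [e, Nat.add_sub_cancel]
  exact main_aux β f α d
end

section
/- Define a(n,k) by the Bessel recurrence a(0,0)=1, a(n,k)=0 for k<0 or k>n, and a(n,k) = a(n−1,k) + (n−k+1)·a(n,k−1). Then for all n ≥ 1 and 0 ≤ i ≤ n, a(n,i) = Σ_{k=0}^{min(n−1,i)} (n−k)_{i−k} · a(n−1,k), where (m)_j is the falling factorial. -/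
open Finset

/-- The Bessel numbers (OEIS A001498): `a 0 0 = 1`, `a n k = 0` for `k > n`, and
`a n k = a (n-1) k + (n - k + 1) * a n (k-1)`. -/
def bessel : ℕ → ℕ → ℕ
  | 0, 0 => 1
  | 0, _ + 1 => 0
  | n + 1, 0 => bessel n 0
  | n + 1, k + 1 =>
      if n + 1 < k + 1 then 0
      else bessel n (k + 1) + ((n + 1) - (k + 1) + 1) * bessel (n + 1) k
  termination_by n k => (n, k)

lemma bessel_eq_zero : ∀ {n k : ℕ}, n < k → bessel n k = 0
  | 0, _+1, _ => by rw [bessel]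
  | n+1, k+1, h => by rw [bessel]; simp [h]

theorem bessel_combinatorial_identity (n i : ℕ) (hn : 1 ≤ n) (hi : i ≤ n) :
    bessel n i =
      ∑ k ∈ Finset.range (min (n - 1) i + 1),
        Nat.descFactorial (n - k) (i - k) * bessel (n - 1) k := by
  obtain ⟨m, rfl⟩ : ∃ m, n = m + 1 := ⟨n - 1, by omega⟩
  simp only [Nat.add_sub_cancel]
  induction i with
  | zero =>
    simp [bessel]
  | succ i ih =>
    have him : i ≤ m := by omega
    have ih' := ih (by omega)
    rw [min_eq_right him] at ih'
    have key : ∀ k ∈ Finset.range (i + 1),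
        Nat.descFactorial (m + 1 - k) (i + 1 - k) * bessel m k
          = (m - i + 1) * (Nat.descFactorial (m + 1 - k) (i - k) * bessel m k) := by
      intro k hk
      rw [Finset.mem_range] at hk
      have h1 : i + 1 - k = (i - k) + 1 := by omega
      rw [h1, Nat.descFactorial_succ]
      have h2 : m + 1 - k - (i - k) = m - i + 1 := by omega
      rw [h2, mul_assoc]
    have hl : bessel (m+1) (i+1) = bessel m (i+1) + (m - i + 1) * bessel (m+1) i := by
      rw [bessel, if_neg (by omega)]
      congr 2
      omega
    rcases Nat.lt_or_ge i m with hlt | hge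
    · rw [min_eq_right (by omega : i + 1 ≤ m), Finset.sum_range_succ,
        Finset.sum_congr rfl key, ← Finset.mul_sum, ← ih', hl, Nat.sub_self,
        Nat.descFactorial_zero, one_mul]
      ring
    · have hie : i = m := by omega
      subst hie
      rw [min_eq_left (by omega : i ≤ i + 1), hl, bessel_eq_zero (by omega),
        Finset.sum_congr rfl key, ← Finset.mul_sum, ← ih']
      simp
end

section
/- For every n ≥ 1 and polynomial f, (x∘I)ⁿ(f)(x) = Σ_{k=0}^{n−1} (−1)^k · (n−1+k)! / (2^k · k! · (n−1−k)!) · x^{n−k} · I^{n+k}(f)(x). -/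
open Polynomial Finset

lemma intOp_monomial (n : ℕ) (a : ℚ) :
    intOp (monomial n a) = monomial (n + 1) (a / (n + 1)) := by
  unfold intOp
  rw [Polynomial.sum_monomial_index a _ (by simp)]
  rw [Polynomial.C_mul_X_pow_eq_monomial]

lemma intOp_add_s7 (f g : Polynomial ℚ) : intOp (f + g) = intOp f + intOp g := by
  unfold intOp
  rw [Polynomial.sum_add_index] <;> intros <;> simp [add_div, add_mul]

lemma intOp_smul (c : ℚ) (f : Polynomial ℚ) : intOp (c • f) = c • intOp f := by
  unfold intOp
  rw [Polynomial.sum_smul_index f c _ (by simp)]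
  rw [Polynomial.sum, Polynomial.sum, Finset.smul_sum]
  refine Finset.sum_congr rfl fun i _ => ?_
  rw [smul_eq_C_mul, mul_div_assoc, Polynomial.C_mul, mul_assoc]

noncomputable def intOpL : Polynomial ℚ →ₗ[ℚ] Polynomial ℚ where
  toFun := intOp
  map_add' := intOp_add_s7
  map_smul' := intOp_smul

lemma intOp_map_sum {ι : Type*} (s : Finset ι) (c : ι → ℚ) (p : ι → Polynomial ℚ) :
    intOp (∑ i ∈ s, c i • p i) = ∑ i ∈ s, c i • intOp (p i) := by
  rw [show intOp = ⇑intOpL from rfl, map_sum]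
  simp only [map_smul]

lemma intOp_X_pow_succ_mul (m : ℕ) (g : Polynomial ℚ) :
    intOp (X ^ (m + 1) * g) =
      X ^ (m + 1) * intOp g - ((m : ℚ) + 1) • intOp (X ^ m * intOp g) := by
  induction g using Polynomial.induction_on' with
  | add p q hp hq =>
      rw [mul_add, intOp_add_s7, hp, hq, intOp_add_s7, mul_add, mul_add, intOp_add_s7, smul_add]
      abel
  | monomial t a =>
      rw [X_pow_eq_monomial, X_pow_eq_monomial]
      simp only [monomial_mul_monomial, intOp_monomial, one_mul, smul_monomial]
      rw [show m + (t + 1) + 1 = m + 1 + t + 1 from by omega,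
        show m + 1 + (t + 1) = m + 1 + t + 1 from by omega]
      rw [eq_sub_iff_add_eq, ← map_add]
      congr 1
      have h1 : ((m : ℚ) + 1 + t + 1) ≠ 0 := by positivity
      have h2 : ((t : ℚ)) + 1 ≠ 0 := by positivity
      have h3 : ((m : ℚ) + (t + 1) + 1) ≠ 0 := by positivity
      push_cast
      rw [smul_eq_mul]
      field_simp
      ring

lemma intOp_X_pow_mul (m : ℕ) (g : Polynomial ℚ) :
    intOp (X ^ m * g) =
      ∑ j ∈ Finset.range (m + 1),
        ((-1 : ℚ) ^ j * (Nat.descFactorial m j : ℚ)) •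
          (X ^ (m - j) * intOp^[j + 1] g) := by
  induction m generalizing g with
  | zero => simp
  | succ m ih =>
      have hB : ∑ j ∈ Finset.range (m + 1),
          ((-1 : ℚ) ^ (j + 1) * (Nat.descFactorial (m + 1) (j + 1) : ℚ)) •
            (X ^ (m + 1 - (j + 1)) * intOp^[j + 1 + 1] g)
          = -(((m : ℚ) + 1) • ∑ j ∈ Finset.range (m + 1),
              ((-1 : ℚ) ^ j * (Nat.descFactorial m j : ℚ)) •
                (X ^ (m - j) * intOp^[j + 1] (intOp g))) := by
        rw [Finset.smul_sum, ← Finset.sum_neg_distrib]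
        refine Finset.sum_congr rfl fun j hj => ?_
        rw [Function.iterate_succ_apply intOp (j + 1) g]
        rw [Nat.succ_sub_succ_eq_sub, smul_smul, ← neg_smul]
        congr 1
        rw [Nat.succ_descFactorial_succ, pow_succ]
        push_cast; ring
      rw [intOp_X_pow_succ_mul, ih (intOp g)]
      conv_rhs => rw [Finset.sum_range_succ']
      rw [hB]
      simp only [pow_zero, Nat.descFactorial_zero, Nat.cast_one, one_mul, Nat.sub_zero,
        zero_add, one_smul, tsub_zero, Function.iterate_one]
      abel

/-- The coefficient in the closed form, written with `descFactorial` so that it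
vanishes for `k > N`. -/
noncomputable def coeffD (N k : ℕ) : ℚ :=
  (-1) ^ k * (((N + k).descFactorial (2 * k) : ℕ) : ℚ) / (2 ^ k * (Nat.factorial k : ℚ))

lemma descFactorial_key (N s : ℕ) :
    (N + 1 - s) * ((N + 1 + s).descFactorial (2 * s)) * (2 * (s + 1))
      + (N + 1 + s).descFactorial (2 * s + 2)
      = (N + 2 + s).descFactorial (2 * s + 2) := by
  rcases le_or_gt s N with h | h
  · obtain ⟨d, rfl⟩ := Nat.le.dest h
    rw [show s + d + 1 - s = d + 1 from by omega,
      show s + d + 2 + s = (s + d + 1 + s) + 1 from by omega,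
      show 2 * s + 2 = (2 * s + 1) + 1 from rfl,
      Nat.succ_descFactorial_succ,
      Nat.descFactorial_succ, Nat.descFactorial_succ,
      show s + d + 1 + s - (2 * s + 1) = d from by omega,
      show s + d + 1 + s - (2 * s) = d + 1 from by omega]
    ring
  · have h1 : (N + 1 + s).descFactorial (2 * s + 2) = 0 :=
      Nat.descFactorial_eq_zero_iff_lt.mpr (by omega)
    have h2 : (N + 2 + s).descFactorial (2 * s + 2) = 0 :=
      Nat.descFactorial_eq_zero_iff_lt.mpr (by omega)
    rw [show N + 1 - s = 0 from by omega, h1, h2]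
    ring

lemma coeffD_rec (N s : ℕ) :
    -(((N + 1 - s : ℕ) : ℚ)) * coeffD (N + 1) s + coeffD N (s + 1) = coeffD (N + 1) (s + 1) := by
  unfold coeffD
  rw [show N + (s + 1) = N + 1 + s from by omega, show N + 1 + (s + 1) = N + 2 + s from by omega,
    show 2 * (s + 1) = 2 * s + 2 from by omega]
  set a := (((N + 1 + s).descFactorial (2 * s) : ℕ) : ℚ) with ha
  set b := (((N + 1 + s).descFactorial (2 * s + 2) : ℕ) : ℚ) with hb
  set c := (((N + 2 + s).descFactorial (2 * s + 2) : ℕ) : ℚ) with hc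
  set w := (((N + 1 - s : ℕ) : ℚ)) with hw
  have hA : w * a * (2 * ((s : ℚ) + 1)) + b = c := by
    rw [ha, hb, hc, hw]
    exact_mod_cast congrArg (Nat.cast : ℕ → ℚ) (descFactorial_key N s)
  rw [← hA, pow_succ (-1 : ℚ) s, pow_succ (2 : ℚ) s, Nat.factorial_succ]
  have h1 : ((2 : ℚ) ^ s) ≠ 0 := by positivity
  have h2 : ((Nat.factorial s : ℕ) : ℚ) ≠ 0 := by
    exact_mod_cast Nat.factorial_ne_zero s
  have h3 : ((s : ℚ)) + 1 ≠ 0 := by positivity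
  push_cast
  field_simp
  ring

lemma coeffD_sum (N s : ℕ) :
    ∑ k ∈ Finset.range (s + 1),
      coeffD N k * ((-1 : ℚ) ^ (s - k) * (((N + 1 - k).descFactorial (s - k) : ℕ) : ℚ))
      = coeffD (N + 1) s := by
  induction s with
  | zero => simp [coeffD]
  | succ s ih =>
      rw [Finset.sum_range_succ]
      have hlast : coeffD N (s + 1) * ((-1 : ℚ) ^ (s + 1 - (s + 1)) *
          (((N + 1 - (s + 1)).descFactorial (s + 1 - (s + 1)) : ℕ) : ℚ)) = coeffD N (s + 1) := by
        simp
      rw [hlast]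
      have hstep : ∑ k ∈ Finset.range (s + 1),
          coeffD N k * ((-1 : ℚ) ^ (s + 1 - k) * (((N + 1 - k).descFactorial (s + 1 - k) : ℕ) : ℚ))
          = -(((N + 1 - s : ℕ) : ℚ)) * ∑ k ∈ Finset.range (s + 1),
              coeffD N k * ((-1 : ℚ) ^ (s - k) * (((N + 1 - k).descFactorial (s - k) : ℕ) : ℚ)) := by
        rw [Finset.mul_sum]
        refine Finset.sum_congr rfl fun k hk => ?_
        have hk' : k ≤ s := Nat.lt_succ_iff.mp (Finset.mem_range.mp hk)
        rw [show s + 1 - k = (s - k) + 1 from by omega, Nat.descFactorial_succ,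
          show N + 1 - k - (s - k) = N + 1 - s from by omega, pow_succ]
        push_cast
        ring
      rw [hstep, ih]
      exact coeffD_rec N s

lemma coeffD_zero_of_gt (N k : ℕ) (h : N < k) : coeffD N k = 0 := by
  unfold coeffD
  rw [Nat.descFactorial_eq_zero_iff_lt.mpr (by omega)]
  simp

lemma main_aux_s7 (N : ℕ) (f : Polynomial ℚ) :
    (fun g => X * intOp g)^[N + 1] f =
      ∑ k ∈ Finset.range (N + 1), coeffD N k • (X ^ (N + 1 - k) * intOp^[N + 1 + k] f) := by
  induction N generalizing f with
  | zero => simp [coeffD]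
  | succ N ih =>
      have h1 : (fun g => X * intOp g)^[N + 1 + 1] f
          = ∑ k ∈ Finset.range (N + 1), coeffD N k •
              (X * intOp (X ^ (N + 1 - k) * intOp^[N + 1 + k] f)) := by
        rw [Function.iterate_succ_apply' (fun g => X * intOp g) (N + 1) f, ih f]
        rw [intOp_map_sum, Finset.mul_sum]
        refine Finset.sum_congr rfl fun k _ => ?_
        rw [mul_smul_comm]
      let G : ℕ → ℕ → Polynomial ℚ := fun k j =>
        (coeffD N k * ((-1 : ℚ) ^ j * (((N + 1 - k).descFactorial j : ℕ) : ℚ))) •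
          (X ^ (N + 1 - k - j + 1) * intOp^[N + 2 + k + j] f)
      have hG : ∀ k j, G k j = (coeffD N k * ((-1 : ℚ) ^ j * (((N + 1 - k).descFactorial j : ℕ) : ℚ))) •
          (X ^ (N + 1 - k - j + 1) * intOp^[N + 2 + k + j] f) := fun _ _ => rfl
      have h2 : ∀ k ∈ Finset.range (N + 2), coeffD N k •
            (X * intOp (X ^ (N + 1 - k) * intOp^[N + 1 + k] f))
          = ∑ j ∈ Finset.range (N + 2), G k j := by
        intro k hk
        rw [intOp_X_pow_mul, Finset.mul_sum, Finset.smul_sum]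
        have step1 : ∀ j ∈ Finset.range (N + 1 - k + 1), coeffD N k •
              (X * (((-1 : ℚ) ^ j * (((N + 1 - k).descFactorial j : ℕ) : ℚ)) •
                (X ^ (N + 1 - k - j) * intOp^[j + 1] (intOp^[N + 1 + k] f))))
            = G k j := by
          intro j hj
          rw [hG]
          rw [mul_smul_comm, smul_smul, ← mul_assoc X, ← pow_succ',
            ← Function.iterate_add_apply, show j + 1 + (N + 1 + k) = N + 2 + k + j from by omega]
        rw [Finset.sum_congr rfl step1]
        apply Finset.sum_subset (Finset.range_subset_range.mpr (show N + 1 - k + 1 ≤ N + 2 from by omega))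
        intro j hj hj2
        have hz : (N + 1 - k).descFactorial j = 0 := Nat.descFactorial_eq_zero_iff_lt.mpr (by
          simp only [Finset.mem_range] at hj hj2; omega)
        simp only [hG, hz]; simp
      calc (fun g => X * intOp g)^[N + 1 + 1] f
          = ∑ k ∈ Finset.range (N + 1), coeffD N k •
              (X * intOp (X ^ (N + 1 - k) * intOp^[N + 1 + k] f)) := h1
        _ = ∑ k ∈ Finset.range (N + 1), ∑ j ∈ Finset.range (N + 2), G k j :=
            Finset.sum_congr rfl fun k hk => h2 k (by
              have := Finset.mem_range.mp hk; exact Finset.mem_range.mpr (by omega))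
        _ = ∑ k ∈ Finset.range (N + 2), ∑ j ∈ Finset.range (N + 2), G k j := by
            conv_rhs => rw [Finset.sum_range_succ]
            have hrow : ∑ j ∈ Finset.range (N + 2), G (N + 1) j = 0 := by
              apply Finset.sum_eq_zero
              intro j _
              simp only [hG, coeffD_zero_of_gt N (N + 1) (by omega)]
              simp
            rw [hrow, add_zero]
        _ = ∑ m ∈ Finset.range (N + 2), ∑ k ∈ Finset.range (N + 2 - m), G m k := by
            refine Finset.sum_congr rfl fun m hm => ?_
            symm
            apply Finset.sum_subset (Finset.range_subset_range.mpr (by omega))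
            intro j hj hj2
            have hz : (N + 1 - m).descFactorial j = 0 := Nat.descFactorial_eq_zero_iff_lt.mpr (by
              simp only [Finset.mem_range] at hj hj2 hm; omega)
            simp only [hG, hz]; simp
        _ = ∑ s ∈ Finset.range (N + 2), ∑ k ∈ Finset.range (s + 1), G k (s - k) :=
            (Finset.sum_range_diag_flip (N + 2) G).symm
        _ = ∑ s ∈ Finset.range (N + 2), coeffD (N + 1) s •
              (X ^ (N + 2 - s) * intOp^[N + 2 + s] f) := by
            refine Finset.sum_congr rfl fun s hs => ?_
            have hs' : s ≤ N + 1 := Nat.lt_succ_iff.mp (Finset.mem_range.mp hs)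
            have hterm : ∀ k ∈ Finset.range (s + 1), G k (s - k)
                = (coeffD N k * ((-1 : ℚ) ^ (s - k) *
                    (((N + 1 - k).descFactorial (s - k) : ℕ) : ℚ))) •
                  (X ^ (N + 2 - s) * intOp^[N + 2 + s] f) := by
              intro k hk
              have hk' : k ≤ s := Nat.lt_succ_iff.mp (Finset.mem_range.mp hk)
              rw [hG]
              rw [show N + 1 - k - (s - k) + 1 = N + 2 - s from by omega,
                show N + 2 + k + (s - k) = N + 2 + s from by omega]
            rw [Finset.sum_congr rfl hterm, ← Finset.sum_smul, coeffD_sum N s]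
        _ = ∑ k ∈ Finset.range (N + 1 + 1), coeffD (N + 1) k •
              (X ^ (N + 1 + 1 - k) * intOp^[N + 1 + 1 + k] f) := rfl

theorem normal_ordering_xI_pow_closed_form (n : ℕ) (hn : 1 ≤ n) (f : Polynomial ℚ) :
    (fun g => X * intOp g)^[n] f =
      ∑ k ∈ Finset.range n,
        Polynomial.C ((-1 : ℚ) ^ k * (Nat.factorial (n - 1 + k) : ℚ) /
            ((2 : ℚ) ^ k * (Nat.factorial k : ℚ) * (Nat.factorial (n - 1 - k) : ℚ))) *
          X ^ (n - k) * intOp^[n + k] f := by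
  obtain ⟨N, rfl⟩ : ∃ N, n = N + 1 := ⟨n - 1, by omega⟩
  rw [main_aux_s7]
  refine Finset.sum_congr rfl fun k hk => ?_
  have hk' : k ≤ N := Nat.lt_succ_iff.mp (Finset.mem_range.mp hk)
  rw [smul_eq_C_mul, ← mul_assoc]
  congr 3
  unfold coeffD
  have hfac : ((N + k - (2 * k)).factorial) * (N + k).descFactorial (2 * k) = (N + k).factorial :=
    Nat.factorial_mul_descFactorial (by omega)
  rw [show N + k - 2 * k = N - k from by omega] at hfac
  have hfacQ : ((N - k).factorial : ℚ) * ((N + k).descFactorial (2 * k) : ℚ)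
      = ((N + k).factorial : ℚ) := by exact_mod_cast congrArg (Nat.cast : ℕ → ℚ) hfac
  rw [show N + 1 - 1 + k = N + k from by omega, show N + 1 - 1 - k = N - k from by omega]
  have h1 : ((2 : ℚ) ^ k) ≠ 0 := by positivity
  have h2 : ((Nat.factorial k : ℕ) : ℚ) ≠ 0 := by exact_mod_cast Nat.factorial_ne_zero k
  have h3 : ((Nat.factorial (N - k) : ℕ) : ℚ) ≠ 0 := by exact_mod_cast Nat.factorial_ne_zero (N - k)
  field_simp
  linear_combination hfacQ
end

section
/- With a^{(λ,δ)}_{n,k} defined as the normal-ordering coefficients of (x^λ I^δ)ⁿ, one has a^{(1,1)}_{n,k} = a(n−1,k), the Bessel number, for all n ≥ 1 and 0 ≤ k ≤ n−1. -/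
open Finset

/-- The generalized normal-ordering coefficients `a^{(λ,δ)}_{n,k}`. -/
def gcoef (lam del : ℕ) : ℕ → ℕ → ℕ
  | 0, _ => 0
  | 1, k => if k = 0 then 1 else 0
  | n + 2, j =>
      ∑ k ∈ Finset.range (min j (lam * n) + 1),
        Nat.descFactorial (lam * (n + 1) - k) (j - k) *
          Nat.choose (j - k + del - 1) (del - 1) * gcoef lam del (n + 1) k

lemma bessel_gt {n k : ℕ} (h : n < k) : bessel n k = 0 := by
  match n, k, h with
  | 0, k + 1, _ => rw [bessel]
  | n + 1, k + 1, h => rw [bessel]; simp [h]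

lemma bessel_succ_succ (n k : ℕ) (h : k ≤ n) :
    bessel (n + 1) (k + 1) = bessel n (k + 1) + (n - k + 1) * bessel (n + 1) k := by
  rw [bessel]
  have h2 : ¬ (n + 1 < k + 1) := by omega
  have h3 : n + 1 - (k + 1) + 1 = n - k + 1 := by omega
  rw [if_neg h2, h3]

lemma key (j n : ℕ) (h : j ≤ n + 1) :
    ∑ k ∈ Finset.range (min j n + 1),
      Nat.descFactorial (n + 1 - k) (j - k) * bessel n k = bessel (n + 1) j := by
  induction j with
  | zero => simp [bessel]
  | succ j ih =>
    have hj : j ≤ n := by omega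
    have hih := ih (by omega)
    rcases Nat.lt_or_ge j n with hlt | hge
    · -- j < n, min (j+1) n = j+1
      have h1 : min (j + 1) n = j + 1 := by omega
      have h2 : min j n = j := by omega
      rw [h2] at hih
      rw [h1, Finset.sum_range_succ]
      have hterm : ∀ k ∈ Finset.range (j + 1),
          Nat.descFactorial (n + 1 - k) (j + 1 - k) * bessel n k
            = (n + 1 - j) * (Nat.descFactorial (n + 1 - k) (j - k) * bessel n k) := by
        intro k hk
        simp only [Finset.mem_range] at hk
        have e : j + 1 - k = (j - k) + 1 := by omega
        rw [e, Nat.descFactorial_succ]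
        have e2 : n + 1 - k - (j - k) = n + 1 - j := by omega
        rw [e2]; ring
      rw [Finset.sum_congr rfl hterm, ← Finset.mul_sum, hih]
      simp only [Nat.sub_self, Nat.descFactorial_zero, one_mul]
      rw [bessel_succ_succ n j hj]
      have e3 : n + 1 - j = n - j + 1 := by omega
      rw [e3, Nat.add_comm]
    · -- j = n
      have hjn : j = n := le_antisymm hj hge
      subst hjn
      have h1 : min (j + 1) j = j := by omega
      have h2 : min j j = j := by omega
      rw [h2] at hih
      rw [h1]
      have hterm : ∀ k ∈ Finset.range (j + 1),
          Nat.descFactorial (j + 1 - k) (j + 1 - k) * bessel j k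
            = Nat.descFactorial (j + 1 - k) (j - k) * bessel j k := by
        intro k hk
        simp only [Finset.mem_range] at hk
        have e : j + 1 - k = (j - k) + 1 := by omega
        rw [e, Nat.descFactorial_succ]
        have e2 : j - k + 1 - (j - k) = 1 := by omega
        rw [e2, one_mul]
      rw [Finset.sum_congr rfl hterm, hih,
        bessel_succ_succ j j le_rfl, bessel_gt (Nat.lt_succ_self j)]
      simp

lemma aux (n : ℕ) : ∀ k ≤ n, gcoef 1 1 (n + 1) k = bessel n k := by
  induction n with
  | zero => intro k hk; interval_cases k; simp [gcoef, bessel]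
  | succ n ih =>
    intro j hj
    show gcoef 1 1 (n + 2) j = _
    rw [gcoef]
    have hc : ∀ k ∈ Finset.range (min j (1 * n) + 1),
        Nat.descFactorial (1 * (n + 1) - k) (j - k) *
          Nat.choose (j - k + 1 - 1) (1 - 1) * gcoef 1 1 (n + 1) k
        = Nat.descFactorial (n + 1 - k) (j - k) * bessel n k := by
      intro k hk
      simp only [Finset.mem_range, one_mul] at hk ⊢
      rw [ih k (by omega)]
      simp
    rw [Finset.sum_congr rfl hc]
    simpa using key j n hj

theorem gcoef_one_one_eq_bessel (n k : ℕ) (hn : 1 ≤ n) (hk : k ≤ n - 1) :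
    gcoef 1 1 n k = bessel (n - 1) k := by
  obtain ⟨m, rfl⟩ := Nat.exists_eq_add_of_le' hn
  simpa using aux m k (by omega)
end

section
/- Uniqueness of normal ordering: if Σ_{i,j} c(i,j) x^i I^j(f) = 0 for all polynomials f, where the sum is finite and the c(i,j) are rational, then all c(i,j) = 0. Equivalently, the operators f ↦ x^i · I^j(f) on polynomials are linearly independent over ℚ. -/
open Polynomial Finset

lemma intOp_monomial_s15 (a : ℚ) (m : ℕ) :
    intOp (C a * X ^ m) = C (a / (m + 1)) * X ^ (m + 1) := by
  rw [intOp, C_mul_X_pow_eq_monomial, sum_monomial_index]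
  simp

noncomputable def q (n j : ℕ) : ℚ := (∏ k ∈ range j, ((n : ℚ) + k + 1))⁻¹

lemma prod_pos (n j : ℕ) : 0 < ∏ k ∈ range j, ((n : ℚ) + k + 1) := by
  apply Finset.prod_pos; intro k _; positivity

lemma iter_intOp (n j : ℕ) : intOp^[j] (X ^ n : ℚ[X]) = C (q n j) * X ^ (n + j) := by
  induction j with
  | zero => simp [q]
  | succ j ih =>
    rw [Function.iterate_succ_apply', ih, intOp_monomial_s15]
    congr 1
    · rw [q, q, prod_range_succ, mul_inv, div_eq_mul_inv]
      push_cast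
      ring_nf

lemma key_sum (c : (ℕ × ℕ) →₀ ℚ)
    (h : ∀ f : Polynomial ℚ,
      (∑ ij ∈ c.support, c ij • (X ^ ij.1 * intOp^[ij.2] f)) = 0) (n s : ℕ) :
    ∑ ij ∈ c.support, (if ij.1 + ij.2 = s then c ij * q n ij.2 else 0) = 0 := by
  have h3 := congrArg (fun p => Polynomial.coeff p (n + s)) (h (X ^ n))
  simp only [Polynomial.finset_sum_coeff, Polynomial.coeff_smul, coeff_zero] at h3
  refine Eq.trans (Finset.sum_congr rfl ?_) h3
  intro ij _
  rw [iter_intOp]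
  have e : (X : ℚ[X]) ^ ij.1 * (C (q n ij.2) * X ^ (n + ij.2))
      = C (q n ij.2) * X ^ (ij.1 + (n + ij.2)) := by ring
  rw [e, coeff_C_mul, coeff_X_pow, smul_eq_mul]
  have : n + s = ij.1 + (n + ij.2) ↔ ij.1 + ij.2 = s := by omega
  simp only [this]
  split_ifs <;> ring

lemma dsum_zero (c : (ℕ × ℕ) →₀ ℚ)
    (h : ∀ f : Polynomial ℚ,
      (∑ ij ∈ c.support, c ij • (X ^ ij.1 * intOp^[ij.2] f)) = 0) (n s : ℕ) :
    ∑ j ∈ range (s + 1), c (s - j, j) * q n j = 0 := by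
  have hk := key_sum c h n s
  set F : ℕ × ℕ → ℚ := fun ij => if ij.1 + ij.2 = s then c ij * q n ij.2 else 0 with hF
  set S : Finset (ℕ × ℕ) := (range (s + 1)).image (fun j => (s - j, j)) with hS
  have h1 : ∑ ij ∈ c.support, F ij = ∑ ij ∈ c.support ∪ S, F ij := by
    apply Finset.sum_subset Finset.subset_union_left
    intro ij _ hij
    have : c ij = 0 := Finsupp.notMem_support_iff.mp hij
    simp [hF, this]
  have h2 : ∑ ij ∈ c.support ∪ S, F ij = ∑ ij ∈ S, F ij := by
    symm
    apply Finset.sum_subset Finset.subset_union_right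
    intro ij _ hij
    have : ¬ (ij.1 + ij.2 = s) := by
      intro he
      apply hij
      rw [hS]
      simp only [Finset.mem_image, Finset.mem_range]
      exact ⟨ij.2, by omega, by ext <;> simp <;> omega⟩
    simp [hF, this]
  have h3 : ∑ ij ∈ S, F ij = ∑ j ∈ range (s + 1), F (s - j, j) := by
    rw [hS]
    apply Finset.sum_image
    intro a _ b _ hab
    exact (Prod.mk.injEq _ _ _ _ ▸ hab).2
  rw [h1, h2, h3] at hk
  rw [← hk]
  apply Finset.sum_congr rfl
  intro j hj
  simp only [Finset.mem_range] at hj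
  have : s - j + j = s := by omega
  simp [hF, this]

lemma d_zero (s : ℕ) (d : ℕ → ℚ)
    (hd : ∀ n : ℕ, ∑ j ∈ range (s + 1), d j * q n j = 0) :
    ∀ j, j ≤ s → d j = 0 := by
  set P : ℚ[X] := ∑ j ∈ range (s + 1), C (d j) * ∏ k ∈ Ico j s, (X + C ((k : ℚ) + 1))
    with hPdef
  have hev : ∀ x : ℚ, P.eval x
      = ∑ j ∈ range (s + 1), d j * ∏ k ∈ Ico j s, (x + k + 1) := by
    intro x
    rw [hPdef, Polynomial.eval_finset_sum]
    apply Finset.sum_congr rfl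
    intro j _
    rw [eval_mul, eval_C, Polynomial.eval_prod]
    congr 1
    apply Finset.prod_congr rfl
    intro k _
    simp [add_assoc]
  have hP : P = 0 := by
    apply Polynomial.eq_zero_of_infinite_isRoot
    apply Set.infinite_of_injective_forall_mem (f := (Nat.cast : ℕ → ℚ))
      Nat.cast_injective
    intro n
    simp only [Set.mem_setOf_eq, IsRoot, hev]
    have : ∀ j ∈ range (s + 1),
        d j * ∏ k ∈ Ico j s, ((n : ℚ) + k + 1)
        = (d j * q n j) * ∏ k ∈ range s, ((n : ℚ) + k + 1) := by
      intro j hj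
      simp only [Finset.mem_range] at hj
      rw [← Finset.prod_range_mul_prod_Ico (fun k => ((n : ℚ) + k + 1)) (by omega : j ≤ s)]
      rw [q]
      field_simp
    rw [Finset.sum_congr rfl this, ← Finset.sum_mul, hd n, zero_mul]
  have main : ∀ t j, j ≤ s → s - j = t → d j = 0 := by
    intro t
    induction t using Nat.strong_induction_on with
    | _ t ih =>
      intro j hj hjt
      have he := congrArg (Polynomial.eval (-(j : ℚ))) hP
      rw [hev, Polynomial.eval_zero] at he
      rw [Finset.sum_eq_single_of_mem j (Finset.mem_range.mpr (by omega))] at he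
      · have hprod : (0:ℚ) < ∏ k ∈ Ico j s, (-(j : ℚ) + k + 1) := by
          apply Finset.prod_pos
          intro k hk
          simp only [Finset.mem_Ico] at hk
          have : (j : ℚ) ≤ (k : ℚ) := by exact_mod_cast hk.1
          linarith
        exact (mul_eq_zero.mp he).resolve_right hprod.ne'
      · intro b hb hbj
        simp only [Finset.mem_range] at hb
        rcases lt_or_gt_of_ne hbj with hlt | hgt
        · -- b < j : factor at k = j - 1 vanishes
          have hj1 : j - 1 ∈ Ico b s := by
            simp only [Finset.mem_Ico]; omega
          rw [Finset.prod_eq_zero hj1, mul_zero]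
          have : ((j : ℚ) - 1) = ((j - 1 : ℕ) : ℚ) := by
            have : 1 ≤ j := by omega
            push_cast [this]; ring
          rw [← this]; ring
        · -- b > j : d b = 0 by induction
          rw [ih (s - b) (by omega) b (by omega) rfl, zero_mul]
  intro j hj
  exact main (s - j) j hj rfl


/-- Uniqueness of normal ordering: the operators `f ↦ x^i I^j f` are linearly
independent, i.e. any finite rational linear combination that annihilates all
polynomials has all coefficients zero. -/
theorem normal_ordering_unique (c : (ℕ × ℕ) →₀ ℚ)
    (h : ∀ f : Polynomial ℚ,
      (∑ ij ∈ c.support, c ij • (X ^ ij.1 * intOp^[ij.2] f)) = 0) :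
    c = 0 := by
  ext ij
  rw [Finsupp.coe_zero, Pi.zero_apply]
  set s := ij.1 + ij.2 with hs
  have h0 := d_zero s (fun j => c (s - j, j)) (fun n => dsum_zero c h n s) ij.2 (by omega)
  have : (s - ij.2, ij.2) = ij := by
    ext <;> simp <;> omega
  rwa [this] at h0
end

section
/- The Bessel numbers a(n,k) (with a(0,0)=1 and recurrence a(n,k)=a(n−1,k)+(n−k+1)a(n,k−1)) satisfy the row-sum identity Σ_{k=0}^{n} a(n,k) = Σ_{k=0}^{n} (n+k)!/(2^k k! (n−k)!), which equals the number of involutions-related quantity y_n(1) (the Bessel polynomial at 1); in particular Σ_k a(1,k)=2, Σ_k a(2,k)=7, Σ_k a(3,k)=37. -/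
open Finset

lemma bessel_of_lt : ∀ n k : ℕ, n < k → bessel n k = 0
  | 0, _ + 1, _ => by rw [bessel]
  | n + 1, k + 1, h => by rw [bessel, if_pos h]

lemma bessel_zero_right : ∀ n : ℕ, bessel n 0 = 1
  | 0 => by rw [bessel]
  | n + 1 => by rw [bessel, bessel_zero_right n]

lemma factorial_ne : ∀ m : ℕ, ((Nat.factorial m : ℚ)) ≠ 0 := by
  intro m
  exact_mod_cast Nat.factorial_ne_zero m

lemma bessel_eq : ∀ n : ℕ, ∀ k : ℕ, k ≤ n →
    (bessel n k : ℚ) =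
      (Nat.factorial (n + k) : ℚ) /
        ((2 : ℚ) ^ k * (Nat.factorial k : ℚ) * (Nat.factorial (n - k) : ℚ)) := by
  intro n
  induction n with
  | zero =>
    intro k hk
    interval_cases k
    simp [bessel_zero_right, Nat.factorial]
  | succ m ih =>
    intro k
    induction k with
    | zero =>
      intro _
      have := factorial_ne (m + 1)
      simp only [bessel_zero_right, Nat.add_zero, Nat.sub_zero, pow_zero,
        Nat.factorial_zero, Nat.cast_one, one_mul]
      rw [div_self this]
    | succ k ihk =>
      intro hk
      have hnotlt : ¬ (m + 1 < k + 1) := by omega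
      rw [bessel, if_neg hnotlt]
      have h2 : (bessel (m+1) k : ℚ) =
          (Nat.factorial (m + 1 + k) : ℚ) /
            ((2 : ℚ) ^ k * (Nat.factorial k : ℚ) * (Nat.factorial (m + 1 - k) : ℚ)) :=
        ihk (by omega)
      rcases Nat.lt_or_ge k m with hkm | hkm
      · -- k + 1 <= m, write m = k + j + 1
        obtain ⟨j, rfl⟩ : ∃ j, m = k + j + 1 := ⟨m - k - 1, by omega⟩
        have h1 : (bessel (k + j + 1) (k+1) : ℚ) =
            (Nat.factorial (k + j + 1 + (k + 1)) : ℚ) /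
              ((2 : ℚ) ^ (k+1) * (Nat.factorial (k+1) : ℚ) *
                (Nat.factorial (k + j + 1 - (k + 1)) : ℚ)) :=
          ih (k + 1) (by omega)
        have e1 : k + j + 1 + 1 - (k + 1) = j + 1 := by omega
        have e2 : k + j + 1 - (k + 1) = j := by omega
        have e3 : k + j + 1 + 1 - k = j + 2 := by omega
        have e4 : k + j + 1 + (k + 1) = 2 * k + j + 2 := by omega
        have e5 : k + j + 1 + 1 + k = 2 * k + j + 2 := by omega
        have e6 : k + j + 1 + 1 + (k + 1) = 2 * k + j + 2 + 1 := by omega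
        simp only [e1, e2, e3, e4, e5, e6] at h1 h2 ⊢
        rw [show j + 2 = j + 1 + 1 from rfl, Nat.factorial_succ (j + 1),
          Nat.factorial_succ j] at h2
        rw [Nat.factorial_succ (2 * k + j + 2), Nat.factorial_succ j,
          Nat.factorial_succ k]
        rw [Nat.factorial_succ k] at h1
        have hj := factorial_ne j
        have hk' := factorial_ne k
        have hN := factorial_ne (2 * k + j + 2)
        push_cast [h1, h2]
        field_simp
        ring
      · -- k = m
        obtain rfl : k = m := by omega
        rw [bessel_of_lt k (k+1) (by omega)]
        have e1 : k + 1 - k = 1 := by omega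
        have e2 : k + 1 - (k + 1) = 0 := by omega
        have e3 : k + 1 + k = 2 * k + 1 := by omega
        have e5 : k + 1 + (k + 1) = 2 * k + 1 + 1 := by omega
        simp only [e1, e2, e3, e5, Nat.factorial_one, Nat.factorial_zero] at h2 ⊢
        rw [Nat.factorial_succ (2 * k + 1), Nat.factorial_succ k]
        have hm := factorial_ne k
        have hN := factorial_ne (2 * k + 1)
        push_cast [h2]
        field_simp
        ring

theorem bessel_row_sum (n : ℕ) :
    ((∑ k ∈ Finset.range (n + 1), (bessel n k : ℚ)) =
      ∑ k ∈ Finset.range (n + 1),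
        (Nat.factorial (n + k) : ℚ) /
          ((2 : ℚ) ^ k * (Nat.factorial k : ℚ) * (Nat.factorial (n - k) : ℚ))) ∧
    (∑ k ∈ Finset.range 2, bessel 1 k) = 2 ∧
    (∑ k ∈ Finset.range 3, bessel 2 k) = 7 ∧
    (∑ k ∈ Finset.range 4, bessel 3 k) = 37 := by
  refine ⟨Finset.sum_congr rfl fun k hk =>
    bessel_eq n k (Nat.lt_succ_iff.mp (Finset.mem_range.mp hk)), ?_, ?_, ?_⟩ <;>
    simp [Finset.sum_range_succ, bessel]
end
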